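/- Let e : ℝ → ℝ satisfy ė = −p(t) φ(t)² e with p, φ continuous, p(t) ≥ p₀ > 0, and suppose φ is persistently exciting: there are T, α > 0 with ∫_t^{t+T} φ(s)² ds ≥ α for all t ≥ 0. Then e(t) → 0 exponentially: |e(t)| ≤ |e(0)| e^{p₀ α} e^{−(p₀ α/T) t} for all t ≥ 0. -/

import Mathlib

/-!
Along a solution of `ė = a e` the quantity `e · exp (-∫ a)` is constant, so
`|e t| = |e 0| exp (-∫₀ᵗ p φ²) ≤ |e 0| exp (-p₀ ∫₀ᵗ φ²)`. Covering `[0, t]` by `⌊t / T⌋` disjoint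
excitation windows of length `T` gives `∫₀ᵗ φ² ≥ α ⌊t / T⌋ ≥ α (t / T - 1)`.
-/

open MeasureTheory Real

theorem eq_mul_exp_integral_of_deriv_eq_mul {e a : ℝ → ℝ} (ha : Continuous a)
    (he : Differentiable ℝ e) (hode : ∀ t, deriv e t = a t * e t) (t₀ t : ℝ) :
    e t = e t₀ * exp (∫ s in t₀..t, a s) := by
  set A : ℝ → ℝ := fun t => ∫ s in t₀..t, a s
  have hA : ∀ t, HasDerivAt A (a t) t := fun t =>
    intervalIntegral.integral_hasDerivAt_right (ha.intervalIntegrable t₀ t)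
      (ha.stronglyMeasurableAtFilter _ _) ha.continuousAt
  have hconst : ∀ t, HasDerivAt (fun t => e t * exp (-A t)) 0 t := by
    intro t
    have h : HasDerivAt (fun t => e t * exp (-A t)) _ t :=
      (he t).hasDerivAt.mul (hA t).neg.exp
    rw [hode t] at h
    convert h using 1
    simp only [Pi.neg_apply]
    ring
  have hconserved : e t * exp (-A t) = e t₀ * exp (-A t₀) :=
    is_const_of_deriv_eq_zero (fun x => (hconst x).differentiableAt)
      (fun x => (hconst x).deriv) t t₀
  have hA₀ : A t₀ = 0 := intervalIntegral.integral_same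
  rw [hA₀, neg_zero, exp_zero, mul_one] at hconserved
  rw [← hconserved, mul_assoc, ← exp_add, neg_add_cancel, exp_zero, mul_one]

section PersistentExcitation

variable {f : ℝ → ℝ} {T α : ℝ}

theorem natCast_mul_le_integral_of_window (hf : ∀ a b, IntervalIntegrable f volume a b)
    (hT : 0 ≤ T) (hwin : ∀ t, 0 ≤ t → α ≤ ∫ s in t..(t + T), f s) (n : ℕ) :
    n * α ≤ ∫ s in (0 : ℝ)..(n * T), f s := by
  induction n with
  | zero => simp
  | succ n ih =>
    have hsplit := intervalIntegral.integral_add_adjacent_intervals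
      (hf 0 (n * T)) (hf (n * T) (n * T + T))
    have hlast := hwin (n * T) (by positivity)
    have hend : ((n + 1 : ℕ) : ℝ) * T = n * T + T := by push_cast; ring
    rw [hend, ← hsplit]
    push_cast
    linarith

theorem mul_sub_one_le_integral_of_window (hf : ∀ a b, IntervalIntegrable f volume a b)
    (hf₀ : ∀ s, 0 ≤ f s) (hT : 0 < T) (hα : 0 ≤ α)
    (hwin : ∀ t, 0 ≤ t → α ≤ ∫ s in t..(t + T), f s)
    {t : ℝ} (ht : 0 ≤ t) :
    α * (t / T - 1) ≤ ∫ s in (0 : ℝ)..t, f s := by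
  set n := ⌊t / T⌋₊
  have hnT : n * T ≤ t := (le_div_iff₀ hT).1 (Nat.floor_le (by positivity))
  have hn : t / T - 1 ≤ n := by linarith [Nat.lt_floor_add_one (t / T)]
  have hsplit := intervalIntegral.integral_add_adjacent_intervals
    (hf 0 (n * T)) (hf (n * T) t)
  have htail : 0 ≤ ∫ s in (n * T)..t, f s :=
    intervalIntegral.integral_nonneg hnT fun s _ => hf₀ s
  have hwindows := natCast_mul_le_integral_of_window hf hT.le hwin n
  linarith [mul_le_mul_of_nonneg_left hn hα]

end PersistentExcitation

theorem rls_error_exponential_convergence (p₀ T α : ℝ) (hp₀ : 0 < p₀)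
    (hT : 0 < T) (hα : 0 < α) (e p φ : ℝ → ℝ)
    (hp : Continuous p) (hφ : Continuous φ) (hpb : ∀ t, p₀ ≤ p t)
    (he : Differentiable ℝ e)
    (hode : ∀ t, deriv e t = -(p t * (φ t) ^ 2) * e t)
    (hPE : ∀ t : ℝ, 0 ≤ t → α ≤ ∫ s in t..(t + T), (φ s) ^ 2) :
    ∀ t : ℝ, 0 ≤ t →
      |e t| ≤ |e 0| * Real.exp (p₀ * α) * Real.exp (-(p₀ * α / T) * t) := by
  intro t ht
  have hφ2 : Continuous fun s => φ s ^ 2 := hφ.pow 2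
  have hsol := eq_mul_exp_integral_of_deriv_eq_mul
    (a := fun s => -(p s * φ s ^ 2)) (hp.mul hφ2).neg he hode 0 t
  have hdamp : p₀ * ∫ s in (0 : ℝ)..t, φ s ^ 2 ≤ ∫ s in (0 : ℝ)..t, p s * φ s ^ 2 := by
    rw [← intervalIntegral.integral_const_mul]
    exact intervalIntegral.integral_mono_on ht
      ((continuous_const.mul hφ2).intervalIntegrable 0 t) ((hp.mul hφ2).intervalIntegrable 0 t)
      fun s _ => by gcongr; exact hpb s
  have hexcite := mul_sub_one_le_integral_of_window hφ2.intervalIntegrable (fun s => sq_nonneg _)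
    hT hα.le hPE ht
  calc |e t| = |e 0| * exp (-∫ s in (0 : ℝ)..t, p s * φ s ^ 2) := by
        rw [hsol, intervalIntegral.integral_neg, abs_mul, abs_exp]
    _ ≤ |e 0| * exp (-(p₀ * (α * (t / T - 1)))) := by
        gcongr
        linarith [mul_le_mul_of_nonneg_left hexcite hp₀.le]
    _ = |e 0| * exp (p₀ * α) * exp (-(p₀ * α / T) * t) := by
        rw [mul_assoc, ← exp_add]
        congr 2
        field_simp
        ring
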